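/- arXiv:2602.08041 — 2 statements merged into one kernel-verified Lean document; each statement's English description precedes it below -/
import Mathlib

section
/- Fix a horizon T ≥ 1, K ≥ 2, a finite context set 𝒵 with m ≥ 1 elements, and a stepsize η ∈ (0,1]. For each t ∈ {1,…,T} let Z_t ∈ 𝒵 be the realized context, Ẑ_t ∈ 𝒵 the predicted context, w_t ∈ Δ_K the played distribution, and ℓ_t ∈ ℝ^K a loss vector with every coordinate in [−1,1]. Let L_T := #{t : Ẑ_t ≠ Z_t}, let F^z := {t : Z_t = z}, let Var(z) := Σ_{r ≥ 2} ‖ℓ_{t_z(r)} − ℓ_{t_z(r−1)}‖_∞ where t_z(1) < t_z(2) < … enumerate F^z, and let π* : 𝒵 → Δ_K be any comparator map. Assume the per-context RVU stability inequality: for every z ∈ 𝒵, Σ_{t ∈ F^z, Ẑ_t = Z_t} (⟨w_t, ℓ_t⟩ − ⟨π*(z), ℓ_t⟩) ≤ (log K)/η + η · Var(z). Then the contextual regret satisfies Σ_{t=1}^T (⟨w_t, ℓ_t⟩ − ⟨π*(Z_t), ℓ_t⟩) ≤ (m · log K)/η + (2/η) · L_T + η · Σ_{z ∈ 𝒵}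 Var(z). -/
open Finset

/-- Within-context variation: for the subsequence of rounds `F` (taken in increasing order),
the sum of sup-norm differences of consecutive loss vectors,
`Var = Σ_{r ≥ 2} ‖ℓ_{t(r)} − ℓ_{t(r−1)}‖_∞`. (The norm on `Fin K → ℝ` is the sup norm.) -/
noncomputable def withinVar {T K : ℕ} (ℓ : Fin T → Fin K → ℝ) (F : Finset (Fin T)) : ℝ :=
  (List.zipWith (fun s t => ‖ℓ t - ℓ s‖) (F.sort (· ≤ ·)) (F.sort (· ≤ ·)).tail).sum

/-- **Proposition 1 (Contextual regret bound: mispredictions drive regret).**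
If within each context the correctly-routed rounds satisfy an RVU-type stability
inequality, then the contextual regret is bounded by
`(m log K)/η + (2/η)·L_T + η·Σ_z Var(z)`. -/
theorem contextual_rvu_regret_bound
    (T K : ℕ) (hT : 1 ≤ T) (hK : 2 ≤ K)
    (𝒵 : Type*) [Fintype 𝒵] [DecidableEq 𝒵]
    (hm : 1 ≤ Fintype.card 𝒵)
    (η : ℝ) (hη : η ∈ Set.Ioc (0 : ℝ) 1)
    (Z Zhat : Fin T → 𝒵)
    (w ℓ : Fin T → Fin K → ℝ)
    (hw : ∀ t, (∀ k, 0 ≤ w t k) ∧ ∑ k, w t k = 1)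
    (hℓ : ∀ t k, |ℓ t k| ≤ 1)
    (πs : 𝒵 → Fin K → ℝ)
    (hπ : ∀ z, (∀ k, 0 ≤ πs z k) ∧ ∑ k, πs z k = 1)
    (L : ℕ) (hL : L = (univ.filter (fun t => Zhat t ≠ Z t)).card)
    (hRVU : ∀ z : 𝒵,
      ∑ t ∈ univ.filter (fun t => Z t = z ∧ Zhat t = Z t),
          ((∑ k, w t k * ℓ t k) - ∑ k, πs z k * ℓ t k)
        ≤ Real.log K / η + η * withinVar ℓ (univ.filter (fun t => Z t = z))) :
    ∑ t, ((∑ k, w t k * ℓ t k) - ∑ k, πs (Z t) k * ℓ t k)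
      ≤ (Fintype.card 𝒵 : ℝ) * Real.log K / η + (2 / η) * L
        + η * ∑ z : 𝒵, withinVar ℓ (univ.filter (fun t => Z t = z)) := by
  obtain ⟨hη0, hη1⟩ := hη
  set f : Fin T → ℝ := fun t => (∑ k, w t k * ℓ t k) - ∑ k, πs (Z t) k * ℓ t k with hf
  -- inner products with a simplex point against losses in [-1,1] lie in [-1,1]
  have hincl : ∀ (p : Fin K → ℝ), (∀ k, 0 ≤ p k) → (∑ k, p k = 1) →
      ∀ t, |∑ k, p k * ℓ t k| ≤ 1 := by
    intro p hp hp1 t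
    calc |∑ k, p k * ℓ t k| ≤ ∑ k, |p k * ℓ t k| := Finset.abs_sum_le_sum_abs _ _
      _ ≤ ∑ k, p k := by
          refine Finset.sum_le_sum fun k _ => ?_
          rw [abs_mul, abs_of_nonneg (hp k)]
          calc p k * |ℓ t k| ≤ p k * 1 := by
                exact mul_le_mul_of_nonneg_left (hℓ t k) (hp k)
            _ = p k := mul_one _
      _ = 1 := hp1
  have hfb : ∀ t, f t ≤ 2 := by
    intro t
    have h1 := hincl (w t) (hw t).1 (hw t).2 t
    have h2 := hincl (πs (Z t)) (hπ (Z t)).1 (hπ (Z t)).2 t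
    have := abs_le.mp h1
    have := abs_le.mp h2
    simp only [hf]
    linarith [(abs_le.mp h1).2, (abs_le.mp h2).1]
  have hsplit : ∑ t, f t =
      (∑ t ∈ univ.filter (fun t => Zhat t = Z t), f t)
      + ∑ t ∈ univ.filter (fun t => Zhat t ≠ Z t), f t := by
    exact (Finset.sum_filter_add_sum_filter_not univ _ f).symm
  -- correct part: fiber over Z
  have hcorrect : (∑ t ∈ univ.filter (fun t => Zhat t = Z t), f t)
      ≤ ∑ z : 𝒵, (Real.log K / η + η * withinVar ℓ (univ.filter (fun t => Z t = z))) := by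
    have hfib : (∑ t ∈ univ.filter (fun t => Zhat t = Z t), f t)
        = ∑ z : 𝒵, ∑ t ∈ (univ.filter (fun t => Zhat t = Z t)).filter (fun t => Z t = z), f t := by
      exact (Finset.sum_fiberwise _ Z f).symm
    rw [hfib]
    refine Finset.sum_le_sum fun z _ => ?_
    have heq : (univ.filter (fun t => Zhat t = Z t)).filter (fun t => Z t = z)
        = univ.filter (fun t => Z t = z ∧ Zhat t = Z t) := by
      rw [Finset.filter_filter]
      congr 1
      ext t
      tauto
    have h := hRVU z
    rw [heq]
    calc ∑ t ∈ univ.filter (fun t => Z t = z ∧ Zhat t = Z t), f t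
        = ∑ t ∈ univ.filter (fun t => Z t = z ∧ Zhat t = Z t),
            ((∑ k, w t k * ℓ t k) - ∑ k, πs z k * ℓ t k) := by
          refine Finset.sum_congr rfl fun t ht => ?_
          simp only [Finset.mem_filter] at ht
          simp [hf, ht.2.1]
      _ ≤ _ := h
  have hmis : (∑ t ∈ univ.filter (fun t => Zhat t ≠ Z t), f t) ≤ (2 / η) * L := by
    have h2le : (2 : ℝ) ≤ 2 / η := by
      rw [le_div_iff₀ hη0]; linarith
    calc (∑ t ∈ univ.filter (fun t => Zhat t ≠ Z t), f t)
        ≤ ∑ t ∈ univ.filter (fun t => Zhat t ≠ Z t), (2 / η) :=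
          Finset.sum_le_sum fun t _ => le_trans (hfb t) h2le
      _ = (univ.filter (fun t => Zhat t ≠ Z t)).card * (2 / η) := by
          rw [Finset.sum_const, nsmul_eq_mul]
      _ = (2 / η) * L := by rw [hL]; ring
  calc ∑ t, f t ≤ (∑ z : 𝒵, (Real.log K / η + η * withinVar ℓ (univ.filter (fun t => Z t = z))))
        + (2 / η) * L := by rw [hsplit]; exact add_le_add hcorrect hmis
    _ = (Fintype.card 𝒵 : ℝ) * Real.log K / η + (2 / η) * L
        + η * ∑ z : 𝒵, withinVar ℓ (univ.filter (fun t => Z t = z)) := by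
      rw [Finset.sum_add_distrib, Finset.sum_const, ← Finset.mul_sum, nsmul_eq_mul,
        Finset.card_univ]
      ring
end

section
/- Fix a horizon T ≥ 1, K ≥ 2, a finite context set 𝒵 with m ≥ 1 elements. For each t ∈ {1,…,T} and each η ∈ (0,1], let w_t^η ∈ Δ_K be the distribution played when the learner is run with stepsize η; let Z_t ∈ 𝒵, Ẑ_t ∈ 𝒵, and ℓ_t ∈ ℝ^K with coordinates in [−1,1] be as before (the same for all η), and let π* : 𝒵 → Δ_K be a comparator map. Define L_T := #{t : Ẑ_t ≠ Z_t}, F^z := {t : Z_t = z}, and Var(z) := Σ_{r ≥ 2} ‖ℓ_{t_z(r)} − ℓ_{t_z(r−1)}‖_∞ with t_z(1) < t_z(2) < … enumerating F^z. Assume that for every η ∈ (0,1] and every z ∈ 𝒵 the per-context RVU inequality holds: Σ_{t ∈ F^z, Ẑ_t = Z_t} (⟨w_t^η, ℓ_t⟩ − ⟨π*(z), ℓ_t⟩) ≤ (log K)/η + η · Var(z). Then there exists η ∈ (0,1] such that the contextual regret satisfies Σ_{t=1}^T (⟨w_t^η, ℓ_t⟩ − ⟨π*(Z_t), ℓ_t⟩)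 ≤ 2·√((m·log K + 2·L_T) · Σ_{z ∈ 𝒵} Var(z)) + (m·log K + 2·L_T). -/
open Finset

lemma sum_zipWith_nonneg {α β : Type*} (f : α → β → ℝ) (hf : ∀ a b, 0 ≤ f a b) :
    ∀ (l1 : List α) (l2 : List β), 0 ≤ (List.zipWith f l1 l2).sum
  | [], _ => by simp
  | _ :: _, [] => by simp
  | a :: l1, b :: l2 => by
    simp only [List.zipWith, List.sum_cons]
    exact add_nonneg (hf a b) (sum_zipWith_nonneg f hf l1 l2)

lemma withinVar_nonneg {T K : ℕ} (ℓ : Fin T → Fin K → ℝ) (F : Finset (Fin T)) :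
    0 ≤ withinVar ℓ F :=
  sum_zipWith_nonneg _ (fun _ _ => norm_nonneg _) _ _

/-- **Tuned contextual regret bound.** If for every stepsize `η ∈ (0,1]` the run with
stepsize `η` satisfies the per-context RVU inequality, then some `η ∈ (0,1]` achieves
contextual regret at most
`2·√((m·log K + 2·L_T)·Σ_z Var(z)) + (m·log K + 2·L_T)`. -/
theorem tuned_contextual_regret_bound
    (T K : ℕ) (hT : 1 ≤ T) (hK : 2 ≤ K)
    (𝒵 : Type*) [Fintype 𝒵] [DecidableEq 𝒵]
    (hm : 1 ≤ Fintype.card 𝒵)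
    (Z Zhat : Fin T → 𝒵)
    (w : ℝ → Fin T → Fin K → ℝ)
    (ℓ : Fin T → Fin K → ℝ)
    (hw : ∀ η ∈ Set.Ioc (0 : ℝ) 1, ∀ t, (∀ k, 0 ≤ w η t k) ∧ ∑ k, w η t k = 1)
    (hℓ : ∀ t k, |ℓ t k| ≤ 1)
    (πs : 𝒵 → Fin K → ℝ)
    (hπ : ∀ z, (∀ k, 0 ≤ πs z k) ∧ ∑ k, πs z k = 1)
    (L : ℕ) (hL : L = (univ.filter (fun t => Zhat t ≠ Z t)).card)
    (hRVU : ∀ η ∈ Set.Ioc (0 : ℝ) 1, ∀ z : 𝒵,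
      ∑ t ∈ univ.filter (fun t => Z t = z ∧ Zhat t = Z t),
          ((∑ k, w η t k * ℓ t k) - ∑ k, πs z k * ℓ t k)
        ≤ Real.log K / η + η * withinVar ℓ (univ.filter (fun t => Z t = z))) :
    ∃ η ∈ Set.Ioc (0 : ℝ) 1,
      ∑ t, ((∑ k, w η t k * ℓ t k) - ∑ k, πs (Z t) k * ℓ t k)
        ≤ 2 * Real.sqrt
              (((Fintype.card 𝒵 : ℝ) * Real.log K + 2 * L)
                * ∑ z : 𝒵, withinVar ℓ (univ.filter (fun t => Z t = z)))
          + ((Fintype.card 𝒵 : ℝ) * Real.log K + 2 * L) := by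
  set m : ℝ := (Fintype.card 𝒵 : ℝ) with hm'
  set S : ℝ := ∑ z : 𝒵, withinVar ℓ (univ.filter (fun t => Z t = z)) with hS
  set A : ℝ := m * Real.log K + 2 * L with hA
  have hlogK : 0 < Real.log K := by
    apply Real.log_pos
    exact_mod_cast lt_of_lt_of_le one_lt_two (by exact_mod_cast hK)
  have hmpos : (1 : ℝ) ≤ m := by rw [hm']; exact_mod_cast hm
  have hLnn : (0:ℝ) ≤ (L:ℝ) := Nat.cast_nonneg L
  have hApos : 0 < A := by nlinarith
  have hSnn : 0 ≤ S := Finset.sum_nonneg fun z _ => withinVar_nonneg _ _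
  -- general regret bound for any η ∈ (0,1]
  have key : ∀ η ∈ Set.Ioc (0 : ℝ) 1,
      ∑ t, ((∑ k, w η t k * ℓ t k) - ∑ k, πs (Z t) k * ℓ t k)
        ≤ m * Real.log K / η + η * S + 2 * L := by
    intro η hη
    set r : Fin T → ℝ := fun t => (∑ k, w η t k * ℓ t k) - ∑ k, πs (Z t) k * ℓ t k with hr
    have hr2 : ∀ t, r t ≤ 2 := by
      intro t
      have h1 : ∑ k, w η t k * ℓ t k ≤ 1 := by
        calc ∑ k, w η t k * ℓ t k ≤ ∑ k, w η t k := by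
              apply Finset.sum_le_sum
              intro k _
              have := (hw η hη t).1 k
              nlinarith [abs_le.mp (hℓ t k)]
          _ = 1 := (hw η hη t).2
      have h2 : (-1 : ℝ) ≤ ∑ k, πs (Z t) k * ℓ t k := by
        have hle : ∑ k, -(πs (Z t) k) ≤ ∑ k, πs (Z t) k * ℓ t k := by
          apply Finset.sum_le_sum
          intro k _
          have := (hπ (Z t)).1 k
          nlinarith [abs_le.mp (hℓ t k)]
        have h3 : ∑ k, -(πs (Z t) k) = -1 := by
          rw [Finset.sum_neg_distrib, (hπ (Z t)).2]
        linarith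
      simp only [hr]; linarith
    have hfib : ∑ t, r t = ∑ z : 𝒵, ∑ t ∈ univ.filter (fun t => Z t = z), r t :=
      (Finset.sum_fiberwise univ Z r).symm
    -- per-fiber bound
    have hfz : ∀ z : 𝒵, ∑ t ∈ univ.filter (fun t => Z t = z), r t
        ≤ Real.log K / η + η * withinVar ℓ (univ.filter (fun t => Z t = z))
          + 2 * (univ.filter (fun t => Z t = z ∧ Zhat t ≠ Z t)).card := by
      intro z
      have hsplit : ∑ t ∈ univ.filter (fun t => Z t = z), r t
          = ∑ t ∈ univ.filter (fun t => Z t = z ∧ Zhat t = Z t), r t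
            + ∑ t ∈ univ.filter (fun t => Z t = z ∧ Zhat t ≠ Z t), r t := by
        rw [← Finset.sum_filter_add_sum_filter_not (univ.filter (fun t => Z t = z))
          (fun t => Zhat t = Z t) r, Finset.filter_filter, Finset.filter_filter]
      rw [hsplit]
      have h1 : ∑ t ∈ univ.filter (fun t => Z t = z ∧ Zhat t = Z t), r t
          ≤ Real.log K / η + η * withinVar ℓ (univ.filter (fun t => Z t = z)) := by
        have heq : ∑ t ∈ univ.filter (fun t => Z t = z ∧ Zhat t = Z t), r t
            = ∑ t ∈ univ.filter (fun t => Z t = z ∧ Zhat t = Z t),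
                ((∑ k, w η t k * ℓ t k) - ∑ k, πs z k * ℓ t k) := by
          apply Finset.sum_congr rfl
          intro t ht
          have hz : Z t = z := ((Finset.mem_filter.mp ht).2).1
          simp only [hr, hz]
        rw [heq]
        exact hRVU η hη z
      have h2 : ∑ t ∈ univ.filter (fun t => Z t = z ∧ Zhat t ≠ Z t), r t
          ≤ 2 * (univ.filter (fun t => Z t = z ∧ Zhat t ≠ Z t)).card := by
        calc ∑ t ∈ univ.filter (fun t => Z t = z ∧ Zhat t ≠ Z t), r t
            ≤ ∑ _t ∈ univ.filter (fun t => Z t = z ∧ Zhat t ≠ Z t), (2:ℝ) :=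
              Finset.sum_le_sum fun t _ => hr2 t
          _ = 2 * (univ.filter (fun t => Z t = z ∧ Zhat t ≠ Z t)).card := by
              rw [Finset.sum_const]; ring
      linarith
    have hcard : ∑ z : 𝒵, ((univ.filter (fun t => Z t = z ∧ Zhat t ≠ Z t)).card : ℝ)
        = (L : ℝ) := by
      have : ∀ z : 𝒵, univ.filter (fun t => Z t = z ∧ Zhat t ≠ Z t)
          = (univ.filter (fun t => Zhat t ≠ Z t)).filter (fun t => Z t = z) := by
        intro z
        rw [Finset.filter_filter]
        apply Finset.filter_congr
        intro t _
        tauto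
      have h2 : ∑ z : 𝒵, ∑ t ∈ (univ.filter (fun t => Zhat t ≠ Z t)).filter
            (fun t => Z t = z), (1:ℝ)
          = ∑ t ∈ univ.filter (fun t => Zhat t ≠ Z t), (1:ℝ) :=
        Finset.sum_fiberwise _ Z _
      simp only [Finset.sum_const, nsmul_eq_mul, mul_one] at h2
      rw [hL]
      push_cast
      calc ∑ z : 𝒵, ((univ.filter (fun t => Z t = z ∧ Zhat t ≠ Z t)).card : ℝ)
          = ∑ z : 𝒵, (((univ.filter (fun t => Zhat t ≠ Z t)).filter
              (fun t => Z t = z)).card : ℝ) := by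
            apply Finset.sum_congr rfl; intro z _; rw [this z]
        _ = ((univ.filter (fun t => Zhat t ≠ Z t)).card : ℝ) := h2
    calc ∑ t, r t = ∑ z : 𝒵, ∑ t ∈ univ.filter (fun t => Z t = z), r t := hfib
      _ ≤ ∑ z : 𝒵, (Real.log K / η + η * withinVar ℓ (univ.filter (fun t => Z t = z))
            + 2 * (univ.filter (fun t => Z t = z ∧ Zhat t ≠ Z t)).card) :=
          Finset.sum_le_sum fun z _ => hfz z
      _ = m * Real.log K / η + η * S + 2 * L := by
          rw [Finset.sum_add_distrib, Finset.sum_add_distrib, Finset.sum_const,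
            ← Finset.mul_sum, ← Finset.mul_sum, hcard]
          simp only [nsmul_eq_mul, hm', hS, Finset.card_univ]
          ring
  -- now tune η
  set a : ℝ := Real.sqrt A with ha'
  set b : ℝ := Real.sqrt S with hb'
  have ha : 0 < a := Real.sqrt_pos.mpr hApos
  have hb0 : 0 ≤ b := Real.sqrt_nonneg S
  have haa : a * a = A := Real.mul_self_sqrt hApos.le
  have hbb : b * b = S := Real.mul_self_sqrt hSnn
  have hsqrtAS : Real.sqrt (A * S) = a * b := Real.sqrt_mul hApos.le S
  rw [hsqrtAS]
  by_cases hcase : S ≤ A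
  · refine ⟨1, ⟨one_pos, le_refl 1⟩, ?_⟩
    have h1 := key 1 ⟨one_pos, le_refl 1⟩
    have hba : b ≤ a := Real.sqrt_le_sqrt hcase
    -- S = b*b ≤ a*b ≤ 2ab
    have : S ≤ 2 * (a * b) := by nlinarith
    calc ∑ t, ((∑ k, w 1 t k * ℓ t k) - ∑ k, πs (Z t) k * ℓ t k)
        ≤ m * Real.log K / 1 + 1 * S + 2 * L := h1
      _ = A + S := by rw [hA]; ring
      _ ≤ 2 * (a * b) + A := by linarith
  · push_neg at hcase
    have hSpos : 0 < S := lt_trans hApos hcase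
    have hbpos : 0 < b := Real.sqrt_pos.mpr hSpos
    have hab : a ≤ b := Real.sqrt_le_sqrt hcase.le
    refine ⟨a / b, ⟨div_pos ha hbpos, (div_le_one hbpos).mpr hab⟩, ?_⟩
    have h1 := key (a / b) ⟨div_pos ha hbpos, (div_le_one hbpos).mpr hab⟩
    have e2 : (a / b) * S = a * b := by
      rw [← hbb]; field_simp
    have e3 : m * Real.log K / (a / b) = m * Real.log K * b / a := by
      rw [div_div_eq_mul_div]
    have hu : (m * Real.log K * b / a) * a = m * Real.log K * b := by
      field_simp
    have h4 : m * Real.log K * b / a + 2 * L ≤ a * b + A := by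
      nlinarith [mul_pos ha hbpos, hu, haa]
    calc ∑ t, ((∑ k, w (a/b) t k * ℓ t k) - ∑ k, πs (Z t) k * ℓ t k)
        ≤ m * Real.log K / (a/b) + (a/b) * S + 2 * L := h1
      _ = m * Real.log K * b / a + 2 * L + a * b := by rw [e2, e3]; ring
      _ ≤ 2 * (a * b) + A := by linarith
end
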